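/- Let X : Fin 3 → Fin 3 → Fin 4 → ℂ have border rank at most 4, and let X_k : Matrix (Fin 3) (Fin 3) ℂ, (X_k) i j = X i j k, be its frontal slices. Then there exist nonzero matrices L, R : Matrix (Fin 3) (Fin 3) ℂ such that L * X_k is symmetric and X_k * R is symmetric for all k : Fin 4 (the symmetrization conditions: L X_k − X_kᵀ Lᵀ = 0 and X_k R − Rᵀ X_kᵀ = 0 for k = 1,…,4). -/

import Mathlib

/-!
For a rank-one term `a bᵀ`, the matrix `L a bᵀ` is symmetric exactly when `L a` is parallel to
`b`, which is at most `2` linear conditions on `L`. Four rank-one terms impose at most `8`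
conditions on the `9`-dimensional space of `3 × 3` matrices, so every tensor of rank at most `4`
has a nonzero `L` making all `L X_k` symmetric, since each slice `X_k` is a combination of the
four terms. Normalizing `L` to the unit sphere, which is compact, shows that the tensors with
such an `L` form a closed set, which therefore contains the tensors of border rank at most `4`.
Swapping the first two factors of `X` transposes the slices, so the transpose of a nonzero `L`
for the swapped tensor is a nonzero `R` for `X`.
-/

/-- A tensor `X : Fin m → Fin n → Fin l → ℂ` has rank at most `r`. -/
def rankAtMost {m n l : ℕ} (r : ℕ) (X : Fin m → Fin n → Fin l → ℂ) : Prop :=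
  ∃ (a : Fin r → Fin m → ℂ) (b : Fin r → Fin n → ℂ) (c : Fin r → Fin l → ℂ),
    ∀ i j k, X i j k = ∑ p, a p i * b p j * c p k

/-- A tensor has border rank at most `r` if it is in the closure of the set of
tensors of rank at most `r`. -/
def borderRankAtMost {m n l : ℕ} (r : ℕ) (X : Fin m → Fin n → Fin l → ℂ) : Prop :=
  X ∈ closure {Y : Fin m → Fin n → Fin l → ℂ | rankAtMost r Y}

open Matrix

section LinearAlgebra

variable {K ι n : Type*} [Field K]

def vecMulVecSkew (b : n → K) : (n → K) →ₗ[K] Matrix n n K :=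
  (vecMulVecBilin K K).flip b - vecMulVecBilin K K b

theorem vecMulVecSkew_apply_eq_zero_iff (b v : n → K) :
    vecMulVecSkew b v = 0 ↔ (vecMulVec v b).IsSymm := by
  rw [vecMulVecSkew, LinearMap.sub_apply, sub_eq_zero, IsSymm, transpose_vecMulVec]
  exact eq_comm

theorem finrank_range_vecMulVecSkew_le [Fintype n] (b : n → K) :
    Module.finrank K (LinearMap.range (vecMulVecSkew b)) ≤ Fintype.card n - 1 := by
  rcases eq_or_ne b 0 with rfl | hb
  · have : vecMulVecSkew (0 : n → K) = 0 := by ext; simp [vecMulVecSkew]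
    rw [this, LinearMap.range_zero, finrank_bot]
    exact Nat.zero_le _
  · have hb_ker : b ∈ LinearMap.ker (vecMulVecSkew b) :=
      (vecMulVecSkew_apply_eq_zero_iff b b).2 (transpose_vecMulVec b b)
    have hker : 1 ≤ Module.finrank K (LinearMap.ker (vecMulVecSkew b)) := by
      rw [← finrank_span_singleton (K := K) hb]
      exact Submodule.finrank_mono ((Submodule.span_singleton_le_iff_mem _ _).2 hb_ker)
    have := LinearMap.finrank_range_add_finrank_ker (vecMulVecSkew b)
    rw [Module.finrank_fintype_fun_eq_card] at this
    omega

theorem exists_ne_zero_forall_isSymm_vecMulVec_mulVec [Fintype ι] [Fintype n]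
    (a b : ι → n → K)
    (h : Fintype.card ι * (Fintype.card n - 1) < Fintype.card n * Fintype.card n) :
    ∃ L : Matrix n n K, L ≠ 0 ∧ ∀ p, (vecMulVec (L *ᵥ a p) (b p)).IsSymm := by
  let Φ : Matrix n n K →ₗ[K] Π p, LinearMap.range (vecMulVecSkew (b p)) :=
    LinearMap.pi fun p => (vecMulVecSkew (b p)).rangeRestrict ∘ₗ (mulVecBilin K K).flip (a p)
  have hdim : Module.finrank K (Π p, LinearMap.range (vecMulVecSkew (b p))) <
      Module.finrank K (Matrix n n K) := by
    rw [Module.finrank_pi_fintype, Module.finrank_matrix, Module.finrank_self, mul_one]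
    calc ∑ p, Module.finrank K (LinearMap.range (vecMulVecSkew (b p)))
        ≤ ∑ _p : ι, (Fintype.card n - 1) :=
          Finset.sum_le_sum fun p _ => finrank_range_vecMulVecSkew_le (b p)
      _ < Fintype.card n * Fintype.card n := by simpa using h
  obtain ⟨L, hL, hL0⟩ :=
    Submodule.exists_mem_ne_zero_of_ne_bot (LinearMap.ker_ne_bot_of_finrank_lt hdim)
  refine ⟨L, hL0, fun p => (vecMulVecSkew_apply_eq_zero_iff _ _).1 ?_⟩
  exact congrArg Subtype.val (congrFun (LinearMap.mem_ker.1 hL) p : Φ L p = 0)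

end LinearAlgebra

theorem isClosed_setOf_exists_ne_zero {E V : Type*} [TopologicalSpace E]
    [NormedAddCommGroup V] [NormedSpace ℝ V] [ProperSpace V] {S : Set (E × V)} (hS : IsClosed S)
    (hsmul : ∀ x v (c : ℝ), (x, v) ∈ S → (x, c • v) ∈ S) :
    IsClosed {x | ∃ v ≠ 0, (x, v) ∈ S} := by
  have : CompactSpace (Metric.sphere (0 : V) 1) :=
    isCompact_iff_compactSpace.1 (isCompact_sphere 0 1)
  have hS' : IsClosed {q : E × Metric.sphere (0 : V) 1 | (q.1, q.2.1) ∈ S} :=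
    hS.preimage (continuous_fst.prodMk (continuous_subtype_val.comp continuous_snd))
  convert isClosedMap_fst_of_compactSpace _ hS' using 1
  ext x
  constructor
  · rintro ⟨v, hv0, hv⟩
    refine ⟨(x, ⟨‖v‖⁻¹ • v, ?_⟩), hsmul x v _ hv, rfl⟩
    simp [norm_smul, hv0]
  · rintro ⟨⟨x, v, hv⟩, hxv, rfl⟩
    exact ⟨v, ne_zero_of_mem_sphere one_ne_zero ⟨v, hv⟩, hxv⟩

section Tensor

variable {m n l r : ℕ}

def frontalSlice (X : Fin m → Fin n → Fin l → ℂ) (k : Fin l) : Matrix (Fin m) (Fin n) ℂ :=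
  of fun i j => X i j k

theorem continuous_frontalSlice (k : Fin l) :
    Continuous fun X : Fin m → Fin n → Fin l → ℂ => frontalSlice X k :=
  continuous_pi fun i => continuous_pi fun j => (continuous_apply k).comp
    ((continuous_apply j).comp (continuous_apply i))

theorem frontalSlice_eq_sum_smul_vecMulVec {X : Fin m → Fin n → Fin l → ℂ}
    {a : Fin r → Fin m → ℂ} {b : Fin r → Fin n → ℂ} {c : Fin r → Fin l → ℂ}
    (hX : ∀ i j k, X i j k = ∑ p, a p i * b p j * c p k) (k : Fin l) :
    frontalSlice X k = ∑ p, c p k • vecMulVec (a p) (b p) := by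
  ext i j
  simp only [frontalSlice, of_apply, hX, Matrix.sum_apply, Matrix.smul_apply, vecMulVec_apply,
    smul_eq_mul]
  exact Finset.sum_congr rfl fun p _ => by ring

theorem rankAtMost.swap {X : Fin m → Fin n → Fin l → ℂ} (hX : rankAtMost r X) :
    rankAtMost r fun i j k => X j i k := by
  obtain ⟨a, b, c, h⟩ := hX
  exact ⟨b, a, c, fun i j k => by
    show X j i k = _
    rw [h]
    exact Finset.sum_congr rfl fun p _ => by ring⟩

theorem borderRankAtMost.swap {X : Fin m → Fin n → Fin l → ℂ} (hX : borderRankAtMost r X) :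
    borderRankAtMost r fun i j k => X j i k :=
  map_mem_closure (f := fun (Y : Fin m → Fin n → Fin l → ℂ) i j k => Y j i k) (by fun_prop)
    hX fun _ hY => hY.swap

theorem frontalSlice_swap (X : Fin m → Fin n → Fin l → ℂ) (k : Fin l) :
    frontalSlice (fun i j k => X j i k) k = (frontalSlice X k)ᵀ :=
  rfl

def HasLeftSymmetrizer (X : Fin n → Fin n → Fin l → ℂ) : Prop :=
  ∃ L : Matrix (Fin n) (Fin n) ℂ, L ≠ 0 ∧ ∀ k, (L * frontalSlice X k).IsSymm

theorem hasLeftSymmetrizer_of_rankAtMost (h : r * (n - 1) < n * n)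
    {X : Fin n → Fin n → Fin l → ℂ} (hX : rankAtMost r X) : HasLeftSymmetrizer X := by
  obtain ⟨a, b, c, habc⟩ := hX
  obtain ⟨L, hL0, hL⟩ := exists_ne_zero_forall_isSymm_vecMulVec_mulVec a b (by simpa using h)
  refine ⟨L, hL0, fun k => ?_⟩
  rw [frontalSlice_eq_sum_smul_vecMulVec habc, IsSymm, Finset.mul_sum, transpose_sum]
  refine Finset.sum_congr rfl fun p _ => ?_
  rw [Matrix.mul_smul, mul_vecMulVec]
  exact (hL p).smul _

section

-- The sup norm induces the product topology on matrices, which is all that matters here.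
attribute [local instance] Matrix.normedAddCommGroup Matrix.normedSpace

theorem isClosed_setOf_hasLeftSymmetrizer :
    IsClosed {X : Fin n → Fin n → Fin l → ℂ | HasLeftSymmetrizer X} := by
  refine isClosed_setOf_exists_ne_zero (V := Matrix (Fin n) (Fin n) ℂ)
    (S := {q | ∀ k, (q.2 * frontalSlice q.1 k).IsSymm}) ?_ fun X L c hXL k => ?_
  · have hprod (k : Fin l) :
        Continuous fun q : (Fin n → Fin n → Fin l → ℂ) × Matrix (Fin n) (Fin n) ℂ =>
          q.2 * frontalSlice q.1 k :=
      continuous_snd.matrix_mul ((continuous_frontalSlice k).comp continuous_fst)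
    simp only [IsSymm, Set.ofPred_forall]
    exact isClosed_iInter fun k => isClosed_eq (hprod k).matrix_transpose (hprod k)
  · rw [smul_mul]
    exact (hXL k).smul c

end

theorem hasLeftSymmetrizer_of_borderRankAtMost (h : r * (n - 1) < n * n)
    {X : Fin n → Fin n → Fin l → ℂ} (hX : borderRankAtMost r X) : HasLeftSymmetrizer X :=
  closure_minimal (fun _ => hasLeftSymmetrizer_of_rankAtMost h)
    isClosed_setOf_hasLeftSymmetrizer hX

end Tensor

/-- Tensors in `V₄(3,3,4)` satisfy the symmetrization conditions: there exist nonzero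
`L, R` such that `L * X_k` and `X_k * R` are symmetric for all frontal slices `X_k`. -/
theorem symmetrization_conditions (X : Fin 3 → Fin 3 → Fin 4 → ℂ)
    (hX : borderRankAtMost 4 X) :
    ∃ L R : Matrix (Fin 3) (Fin 3) ℂ, L ≠ 0 ∧ R ≠ 0 ∧
      (∀ k : Fin 4, ((L * Matrix.of fun i j => X i j k)ᵀ = L * Matrix.of fun i j => X i j k)) ∧
      (∀ k : Fin 4, (((Matrix.of fun i j => X i j k) * R)ᵀ = (Matrix.of fun i j => X i j k) * R)) := by
  obtain ⟨L, hL0, hL⟩ := hasLeftSymmetrizer_of_borderRankAtMost (by norm_num) hX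
  obtain ⟨R, hR0, hR⟩ := hasLeftSymmetrizer_of_borderRankAtMost (by norm_num) hX.swap
  refine ⟨L, Rᵀ, hL0, fun h => hR0 (transpose_eq_zero.1 h), hL, fun k => ?_⟩
  have := (hR k).transpose
  rwa [frontalSlice_swap, transpose_mul, transpose_transpose] at this
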